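/- Suppose in a vector space V: divH = (2/3)Θ̇·ω − (1/2)curl q − (2/3)(μ − (1/3)Θ²)·ω, the constraint divH + (μ + p)·ω + (1/2)curl q = 0, and the Raychaudhuri equation Θ̇ = −(1/3)Θ² − (1/2)(μ + 3p) + div u̇. Then (2/3)(div u̇)·ω = 0. -/
import Mathlib


theorem magnetic_constraint_consistency
    {V : Type*} [AddCommGroup V] [Module ℝ V]
    (divH curlq ω : V) (Θdot Θ μ p divudot : ℝ)
    (h1 : divH = ((2/3) * Θdot) • ω - (1/2) • curlq - ((2/3) * (μ - (1/3) * Θ^2)) • ω)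
    (h2 : divH + (μ + p) • ω + (1/2) • curlq = 0)
    (hRay : Θdot = -(1/3) * Θ^2 - (1/2) * (μ + 3*p) + divudot) :
    ((2/3) * divudot) • ω = 0 := by
  subst h1 hRay
  rw [show ((2:ℝ)/3) * divudot = ((2/3) * (-(1/3) * Θ^2 - (1/2) * (μ + 3*p) + divudot) - (2/3) * (μ - (1/3) * Θ^2) + (μ + p)) by ring]
  rw [add_smul, sub_smul]
  linear_combination (norm := module) h2
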